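/- arXiv:2310.08460 — 4 statements merged into one kernel-verified Lean document; each statement's English description precedes it below -/
import Mathlib

section
/- Let f: ℝ → ℝ be continuously differentiable on (0,∞) with f(t) > 0 for t > 0 and f(t) = 0 for t ≤ 0, let F(t) := ∫₀^t f(s) ds, and suppose there exists τ ∈ (0,1) such that F(t)f'(t)/f(t)² ≥ τ for all t > 0. Then f is monotone increasing on (0,∞) and F(t) ≤ (1-τ) t f(t) for every t ≥ 0. -/
open MeasureTheory Real Filter
open scoped Topology ENNReal RealInnerProductSpace

noncomputable section

/-- Euclidean space `ℝ^N`. -/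
abbrev Rn (N : ℕ) := EuclideanSpace ℝ (Fin N)

/-- The constant `C_N = (2^{N-1} π^{N/2} Γ(N/2))⁻¹`. -/
def CN (N : ℕ) : ℝ :=
  ((2:ℝ) ^ (N - 1) * Real.pi ^ ((N:ℝ)/2) * Real.Gamma ((N:ℝ)/2))⁻¹

/-- Surface measure `ω_{N-1}` of the unit sphere in `ℝ^N`, i.e. `N · |B₁|`. -/
def omegaS (N : ℕ) : ℝ := (N : ℝ) * (volume (Metric.ball (0 : Rn N) 1)).toReal

/-- Radial symmetry. -/
def IsRadial {N : ℕ} (u : Rn N → ℝ) : Prop := ∀ x y : Rn N, ‖x‖ = ‖y‖ → u x = u y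

/-- Membership in the space `E`. -/
def memE (N : ℕ) (A : ℝ → ℝ) (u : Rn N → ℝ) : Prop :=
  MeasureTheory.LocallyIntegrable (fun x : Rn N => |u x| ^ N) volume ∧
  MeasureTheory.Integrable (fun x : Rn N => A ‖x‖ * ‖gradient u x‖ ^ N) volume

/-- The norm of `E`. -/
def normE (N : ℕ) (A : ℝ → ℝ) (u : Rn N → ℝ) : ℝ :=
  (∫ x : Rn N, A ‖x‖ * ‖gradient u x‖ ^ N) ^ ((N:ℝ)⁻¹)

/-- Primitive `F(s) = ∫₀^s f`. -/
def Fprim (f : ℝ → ℝ) : ℝ → ℝ := fun s => ∫ t in (0:ℝ)..s, f t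

/-- Approximating kernel `G_μ(r) = (r^{-μ}-1)/μ`. -/
def Gmu (μ r : ℝ) : ℝ := (r ^ (-μ) - 1) / μ

/-- Assumption (A). -/
def condA (A : ℝ → ℝ) (A0 ℓ : ℝ) : Prop :=
  ContinuousOn A (Set.Ioi 0) ∧ (∃ c > 0, ∀ᶠ r in 𝓝[>] (0:ℝ), c ≤ A r) ∧
  0 < A0 ∧ 0 < ℓ ∧ ∀ r > 0, A0 * r ^ ℓ ≤ A r

/-- Assumption (Q). -/
def condQ (N : ℕ) (Q : ℝ → ℝ) (b0 b : ℝ) : Prop :=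
  ContinuousOn Q (Set.Ioi 0) ∧ (∀ r > 0, 0 < Q r) ∧
  -(N:ℝ) < b0 ∧ -(N:ℝ) < b ∧
  (∃ M : ℝ, ∀ᶠ r in 𝓝[>] (0:ℝ), Q r / r ^ b0 ≤ M) ∧
  (∃ M : ℝ, ∀ᶠ r in atTop, Q r / r ^ b ≤ M)

/-- The exponent `γ`. -/
def gam (N : ℕ) (ℓ b : ℝ) : ℝ :=
  if b < ℓ - N then (N:ℝ) else (b - ℓ + N) * ((N:ℝ)+1) / ℓ + N

/-- Assumption (A'). -/
def condA' (A : ℝ → ℝ) (A0 ℓ L r0 : ℝ) : Prop :=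
  0 < r0 ∧ 0 < L ∧
  ∀ r : ℝ, 0 < r → r ≤ r0 → A0 * (1 + r ^ ℓ) ≤ A r ∧ A r ≤ A0 * (1 + r ^ L)

/-- `b̃₀ := max {b₀, b₀(1-μ₀/(2N))}`. -/
def tb0 (N : ℕ) (b0 μ0 : ℝ) : ℝ := max b0 (b0 * (1 - μ0 / (2*(N:ℝ))))

/-- Assumption (Q'). -/
def condQ' (Q : ℝ → ℝ) (t CQ : ℝ) : Prop :=
  0 < CQ ∧ Filter.liminf (fun r => Q r / r ^ t) (𝓝[>] (0:ℝ)) = CQ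

/-- Assumption (f0). -/
def condf0 (f : ℝ → ℝ) : Prop := (∀ t > 0, 0 < f t) ∧ ∀ t ≤ 0, f t = 0

/-- Assumption (f1). -/
def condf1 (N : ℕ) (f : ℝ → ℝ) (α0 : ℝ) : Prop :=
  ContDiffOn ℝ 1 f (Set.Ioi 0) ∧ 0 < α0 ∧
  (∀ α > α0,
    Tendsto (fun t => f t * Real.exp (-α * t ^ ((N:ℝ)/((N:ℝ)-1)))) atTop (𝓝 0)) ∧
  (∀ α < α0,
    Tendsto (fun t => f t * Real.exp (-α * t ^ ((N:ℝ)/((N:ℝ)-1)))) atTop atTop)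

/-- Assumption (f2): `f(t) = o(t^{p-1})` as `t → 0⁺`. -/
def condf2 (f : ℝ → ℝ) (p : ℝ) : Prop :=
  (fun t => f t) =o[𝓝[>] (0:ℝ)] fun t => t ^ (p - 1)

/-- Assumption (f3). -/
def condf3 (f : ℝ → ℝ) (τ C : ℝ) : Prop :=
  ∀ t > 0, τ ≤ Fprim f t * deriv f t / f t ^ 2 ∧ Fprim f t * deriv f t / f t ^ 2 ≤ C

/-- Assumption (f4). -/
def condf4 (f : ℝ → ℝ) : Prop :=
  Tendsto (fun t => Fprim f t * deriv f t / f t ^ 2) atTop (𝓝 1)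

/-- Assumption (f5), in the form `liminf_{t→∞} t^λ f(t)F(t) e^{-2α₀ t^{N/(N-1)}} ≥ β`. -/
def condf5 (N : ℕ) (f : ℝ → ℝ) (α0 β lam : ℝ) : Prop :=
  ∀ c < β, ∀ᶠ t in atTop,
    c ≤ t ^ lam * (f t * Fprim f t) * Real.exp (-(2*α0) * t ^ ((N:ℝ)/((N:ℝ)-1)))

/-- The explicit constant `β₀` (case `λ = 1 + N/(N-1)`), with `ρ = min{1/4, r₀, r_Q}`. -/
def beta0 (N : ℕ) (A0 α0 CQ t r0 rQ L : ℝ) : ℝ :=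
  (A0 / omegaS N) * (2 * (t + (N:ℝ)) ^ ((N:ℝ) + 2)) /
    (α0 ^ N * CN N * CQ ^ 2 * (min (1/4) (min r0 rQ)) ^ (2 * (t + (N:ℝ)))) *
    Real.exp (2 * (t + (N:ℝ)) * (min (1/4) (min r0 rQ)) ^ L / (((N:ℝ) - 1) * L))

/-- The threshold `β₀` in (f5): `0` if `λ < 1 + N/(N-1)`, the explicit constant otherwise. -/
def beta0' (N : ℕ) (A0 α0 CQ t r0 rQ L lam : ℝ) : ℝ :=
  if lam < 1 + (N:ℝ)/((N:ℝ)-1) then 0 else beta0 N A0 α0 CQ t r0 rQ L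

/-- Weak solution of the logarithmic Choquard equation. -/
def weakSolLog (N : ℕ) (A Q f : ℝ → ℝ) (u : Rn N → ℝ) : Prop :=
  ∀ φ : Rn N → ℝ, memE N A φ →
    (∫ x : Rn N, A ‖x‖ * ‖gradient u x‖ ^ (N - 2) * ⟪gradient u x, gradient φ x⟫) =
    CN N * ∫ x : Rn N,
      (∫ y : Rn N, Real.log (1 / ‖x - y‖) * (Q ‖y‖ * Fprim f (u y))) *
        (Q ‖x‖ * f (u x) * φ x)

/-- Weak solution of the approximating Choquard equation. -/
def weakSolMu (N : ℕ) (A Q f : ℝ → ℝ) (μ : ℝ) (u : Rn N → ℝ) : Prop :=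
  ∀ φ : Rn N → ℝ, memE N A φ →
    (∫ x : Rn N, A ‖x‖ * ‖gradient u x‖ ^ (N - 2) * ⟪gradient u x, gradient φ x⟫) =
    CN N * ∫ x : Rn N,
      (∫ y : Rn N, Gmu μ ‖x - y‖ * (Q ‖y‖ * Fprim f (u y))) *
        (Q ‖x‖ * f (u x) * φ x)

/-- The approximating functional `J_μ`. -/
def Jmu (N : ℕ) (A Q f : ℝ → ℝ) (μ : ℝ) (u : Rn N → ℝ) : ℝ :=
  (1 / (N:ℝ)) * (∫ x : Rn N, A ‖x‖ * ‖gradient u x‖ ^ N) -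
  (CN N / 2) * ∫ x : Rn N, ∫ y : Rn N,
    Gmu μ ‖x - y‖ * (Q ‖x‖ * Fprim f (u x)) * (Q ‖y‖ * Fprim f (u y))

/-- The mountain pass level `c_μ`. -/
def cMP (N : ℕ) (A Q f : ℝ → ℝ) (μ : ℝ) : ℝ :=
  sInf {c : ℝ | ∃ γ : ℝ → Rn N → ℝ,
    γ 0 = 0 ∧ (∀ t ∈ Set.Icc (0:ℝ) 1, memE N A (γ t)) ∧
    (∀ t ∈ Set.Icc (0:ℝ) 1,
      Tendsto (fun s => normE N A (fun x => γ s x - γ t x)) (𝓝[Set.Icc (0:ℝ) 1] t) (𝓝 0)) ∧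
    Jmu N A Q f μ (γ 1) < 0 ∧
    c = ⨆ t : Set.Icc (0:ℝ) 1, Jmu N A Q f μ (γ t.1)}

theorem f_monotone_and_F_bound (f : ℝ → ℝ) (τ : ℝ)
    (hC1 : ContDiffOn ℝ 1 f (Set.Ioi 0))
    (hpos : ∀ t > 0, 0 < f t) (hzero : ∀ t ≤ 0, f t = 0)
    (hτ0 : 0 < τ) (hτ1 : τ < 1)
    (hlow : ∀ t > 0, τ ≤ Fprim f t * deriv f t / f t ^ 2) :
    MonotoneOn f (Set.Ioi 0) ∧
    ∀ t : ℝ, 0 ≤ t → Fprim f t ≤ (1 - τ) * t * f t := by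
  have hfc : ContinuousOn f (Set.Ioi 0) := hC1.continuousOn
  -- integrability of f on [0,t]
  have hint : ∀ t, 0 < t → IntervalIntegrable f volume 0 t := by
    intro t ht
    by_contra hni
    have hz : Fprim f t = 0 := intervalIntegral.integral_undef hni
    have h := hlow t ht
    rw [hz] at h
    simp at h
    linarith
  have hFpos : ∀ t, 0 < t → 0 < Fprim f t := by
    intro t ht
    exact intervalIntegral.intervalIntegral_pos_of_pos_on (hint t ht)
      (fun x hx => hpos x hx.1) ht
  -- derivative of f
  have hfd : ∀ t, 0 < t → HasDerivAt f (deriv f t) t := by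
    intro t ht
    exact (((hC1.differentiableOn one_ne_zero) t ht).differentiableAt
      (isOpen_Ioi.mem_nhds ht)).hasDerivAt
  have hf2 : ∀ t, 0 < t → (0:ℝ) < f t ^ 2 := fun t ht => by have := hpos t ht; positivity
  have hf'pos : ∀ t, 0 < t → 0 < deriv f t := by
    intro t ht
    by_contra hle
    push_neg at hle
    have h1 : Fprim f t * deriv f t / f t ^ 2 ≤ 0 :=
      div_nonpos_of_nonpos_of_nonneg
        (mul_nonpos_of_nonneg_of_nonpos (hFpos t ht).le hle) (sq_nonneg _)
    linarith [hlow t ht]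
  have hmono : StrictMonoOn f (Set.Ioi 0) := by
    apply strictMonoOn_of_deriv_pos (convex_Ioi 0) hfc
    rw [interior_Ioi]
    exact fun x hx => hf'pos x hx
  -- derivative of F
  have hFd : ∀ t, 0 < t → HasDerivAt (Fprim f) (f t) t := by
    intro t ht
    exact intervalIntegral.integral_hasDerivAt_right (hint t ht)
      (hfc.stronglyMeasurableAtFilter isOpen_Ioi t ht)
      (hfc.continuousAt (isOpen_Ioi.mem_nhds ht))
  -- the auxiliary function ψ
  set ψ : ℝ → ℝ := fun t => (1 - τ) * t - Fprim f t / f t with hψdef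
  have hψd : ∀ t, 0 < t → HasDerivAt ψ
      ((1 - τ) * 1 - (f t * f t - Fprim f t * deriv f t) / f t ^ 2) t := by
    intro t ht
    exact ((hasDerivAt_id t).const_mul (1 - τ)).sub
      (((hFd t ht).div (hfd t ht) (hpos t ht).ne'))
  have hψmono : MonotoneOn ψ (Set.Ioi 0) := by
    apply monotoneOn_of_deriv_nonneg (convex_Ioi 0)
    · exact fun t ht => (hψd t ht).continuousAt.continuousWithinAt
    · rw [interior_Ioi]
      exact fun t ht => (hψd t ht).differentiableAt.differentiableWithinAt
    · rw [interior_Ioi]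
      intro t ht
      rw [(hψd t ht).deriv]
      have h2 : τ * f t ^ 2 ≤ Fprim f t * deriv f t :=
        (le_div_iff₀ (hf2 t ht)).mp (hlow t ht)
      rw [sub_nonneg, mul_one, div_le_iff₀ (hf2 t ht)]
      nlinarith [hf2 t ht]
  -- F(s) ≤ s f(s)
  have hFle : ∀ s, 0 < s → Fprim f s ≤ s * f s := by
    intro s hs
    have h1 : Fprim f s ≤ ∫ _ in (0:ℝ)..s, f s := by
      apply intervalIntegral.integral_mono_on hs.le (hint s hs) intervalIntegrable_const
      intro x hx
      rcases eq_or_lt_of_le hx.1 with h | h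
      · rw [hzero x h.symm.le]; exact (hpos s hs).le
      · rcases eq_or_lt_of_le hx.2 with h' | h'
        · rw [h']
        · exact (hmono h (Set.mem_Ioi.mpr hs) h').le
    simpa using h1
  refine ⟨hmono.monotoneOn, ?_⟩
  intro t ht
  rcases eq_or_lt_of_le ht with h | h
  · simp [Fprim, ← h]
  · have hψnn : 0 ≤ ψ t := by
      by_contra hneg
      push_neg at hneg
      set s := min (t / 2) (-(ψ t) / (2 * τ)) with hs
      have hψt : 0 < -(ψ t) := by linarith
      have hs0 : 0 < s := lt_min (by linarith) (by positivity)
      have hst : s < t := lt_of_le_of_lt (min_le_left _ _) (by linarith)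
      have h1 : ψ s ≤ ψ t := hψmono (Set.mem_Ioi.mpr hs0) (Set.mem_Ioi.mpr h) hst.le
      have hdiv : Fprim f s / f s ≤ s := (div_le_iff₀ (hpos s hs0)).mpr (hFle s hs0)
      have h2 : -τ * s ≤ ψ s := by
        simp only [hψdef]
        linarith
      have h3 : s ≤ -(ψ t) / (2 * τ) := min_le_right _ _
      have h4 : -τ * (-(ψ t) / (2 * τ)) ≤ -τ * s := by nlinarith
      have h5 : -τ * (-(ψ t) / (2 * τ)) = ψ t / 2 := by
        field_simp
      have h6 : ψ t / 2 ≤ -τ * s := h5 ▸ h4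
      clear_value s ψ
      linarith
    have hdiv : Fprim f t / f t ≤ (1 - τ) * t := by
      simp only [hψdef] at hψnn
      linarith
    have := (div_le_iff₀ (hpos t h)).mp hdiv
    linarith [this]

end
end

section
/- Let N ≥ 2, assume (A), (Q), that f satisfies (f0) and (f3) with constant τ ∈ (1-2/N, 1), and let μ ∈ (0,μ₀). Suppose u ∈ E_rad is a nonnegative weak solution of the approximating Choquard equation, i.e. ∫_{ℝ^N} A(|x|)|∇u|^{N-2}∇u·∇φ dx = C_N ∬ G_μ(x-y) Q(|y|)F(u(y)) Q(|x|) f(u(x)) φ(x) dy dx for all φ ∈ E, and assume the function equal to F(u)/f(u) on {u > 0} and to 0 elsewhere belongs to E. Then (τ - 1 + 2/N) ‖u‖^N ≤ 2 J_μ(u). -/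
open MeasureTheory Real Filter
open scoped Topology ENNReal RealInnerProductSpace

noncomputable section

/-!
Test the weak formulation with `v = F(u)/f(u)`. By the chain rule `∇v = (1 - F f'/f²)(u) ∇u`, and
(f3) bounds the factor by `1 - τ`, so the left-hand side is at most `(1 - τ)‖u‖^N`. Since
`f(u) v = F(u)`, the right-hand side is exactly `C_N D`, with `D` the double integral in `J_μ(u)`. Hence
`C_N D ≤ (1 - τ)‖u‖^N`, and `2 J_μ(u) = (2/N)‖u‖^N - C_N D ≥ (τ - 1 + 2/N)‖u‖^N`.
-/

open Set

def Fdivf (f : ℝ → ℝ) (s : ℝ) : ℝ := if 0 < s then Fprim f s / f s else 0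

section Gradient

variable {E : Type*} [NormedAddCommGroup E] [InnerProductSpace ℝ E] [CompleteSpace E]

theorem HasDerivAt.gradient_comp {g : ℝ → ℝ} {g' : ℝ} {u : E → ℝ} {x : E}
    (hg : HasDerivAt g g' (u x)) (hu : DifferentiableAt ℝ u x) :
    gradient (g ∘ u) x = g' • gradient u x := by
  refine HasGradientAt.gradient ?_
  rw [hasGradientAt_iff_hasFDerivAt, map_smul]
  exact hg.comp_hasFDerivAt x (hasGradientAt_iff_hasFDerivAt.mp hu.hasGradientAt)

theorem IsLocalMin.gradient_eq_zero {u : E → ℝ} {x : E} (h : IsLocalMin u x) :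
    gradient u x = 0 := by
  simp [gradient, h.fderiv_eq_zero]

theorem inner_gradient_comp_le_of_nonneg {u : E → ℝ} (hu : ∀ x, 0 ≤ u x) {g g' : ℝ → ℝ} {κ : ℝ}
    (hg : ∀ t > 0, HasDerivAt g (g' t) t) (hκ : ∀ t > 0, g' t ≤ κ) (x : E) :
    ⟪gradient u x, gradient (g ∘ u) x⟫ ≤ κ * ‖gradient u x‖ ^ 2 := by
  by_cases hdu : DifferentiableAt ℝ u x
  swap
  · simp [gradient_eq_zero_of_not_differentiableAt hdu]
  rcases (hu x).eq_or_lt with hzero | hpos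
  · have hmin : IsLocalMin u x := Eventually.of_forall fun y => hzero ▸ hu y
    simp [hmin.gradient_eq_zero]
  · rw [(hg _ hpos).gradient_comp hdu, real_inner_smul_right, real_inner_self_eq_norm_sq]
    exact mul_le_mul_of_nonneg_right (hκ _ hpos) (sq_nonneg _)

end Gradient

section Primitive

variable {f : ℝ → ℝ} {t : ℝ}

theorem hasDerivAt_Fprim (hf : ContinuousOn f (Ioi 0)) (ht : 0 < t)
    (hint : IntervalIntegrable f volume 0 t) : HasDerivAt (Fprim f) (f t) t :=
  intervalIntegral.integral_hasDerivAt_right hint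
    (hf.stronglyMeasurableAtFilter isOpen_Ioi t ht) (hf.continuousAt (Ioi_mem_nhds ht))

theorem intervalIntegrable_of_Fprim_ne_zero (h : Fprim f t ≠ 0) :
    IntervalIntegrable f volume 0 t := by
  by_contra hint
  exact h (intervalIntegral.integral_undef hint)

theorem hasDerivAt_Fdivf (hf : ContDiffOn ℝ 1 f (Ioi 0)) (ht : 0 < t) (hft : f t ≠ 0)
    (hint : IntervalIntegrable f volume 0 t) :
    HasDerivAt (Fdivf f) (1 - Fprim f t * deriv f t / f t ^ 2) t := by
  have hdf : HasDerivAt f (deriv f t) t :=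
    ((hf.differentiableOn one_ne_zero).differentiableAt (Ioi_mem_nhds ht)).hasDerivAt
  have hquot := (hasDerivAt_Fprim hf.continuousOn ht hint).div hdf hft
  refine (hquot.congr_deriv (by field_simp)).congr_of_eventuallyEq ?_
  filter_upwards [Ioi_mem_nhds ht] with s hs using if_pos hs

theorem condf0.mul_Fdivf (hf0 : condf0 f) (ht : 0 ≤ t) : f t * Fdivf f t = Fprim f t := by
  rcases ht.eq_or_lt with rfl | ht
  · simp [Fdivf, Fprim]
  · rw [Fdivf, if_pos ht, mul_div_cancel₀ _ (hf0.1 t ht).ne']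

theorem condf3.hasDerivAt_Fdivf {τ C : ℝ} (hf3 : condf3 f τ C) (hτ : 0 < τ) (hf0 : condf0 f)
    (hf : ContDiffOn ℝ 1 f (Ioi 0)) (ht : 0 < t) :
    HasDerivAt (Fdivf f) (1 - Fprim f t * deriv f t / f t ^ 2) t := by
  -- `F(t) = 0` would make the quotient in (f3) vanish, contradicting `τ > 0`.
  have hF : Fprim f t ≠ 0 := fun hF => by
    have := (hf3 t ht).1
    simp only [hF, zero_mul, zero_div] at this
    linarith
  exact _root_.hasDerivAt_Fdivf hf ht (hf0.1 t ht).ne' (intervalIntegrable_of_Fprim_ne_zero hF)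

end Primitive

theorem integral_le_of_ae_le_of_integrable {α : Type*} [MeasurableSpace α] {μ : Measure α}
    {f g : α → ℝ} (hle : f ≤ᵐ[μ] g) (hg : Integrable g μ) (hg0 : 0 ≤ ∫ x, g x ∂μ) :
    ∫ x, f x ∂μ ≤ ∫ x, g x ∂μ := by
  by_cases hf : Integrable f μ
  · exact integral_mono_ae hf hg hle
  · rwa [integral_undef hf]

section Energy

variable {N : ℕ} {A : ℝ → ℝ} {A0 ℓ : ℝ}

theorem condA.pos (hA : condA A A0 ℓ) {r : ℝ} (hr : 0 < r) : 0 < A r := by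
  obtain ⟨-, -, hA0, -, hlow⟩ := hA
  exact lt_of_lt_of_le (by positivity) (hlow r hr)

theorem condA.ae_pos [NeZero N] (hA : condA A A0 ℓ) : ∀ᵐ x : Rn N, 0 < A ‖x‖ := by
  filter_upwards [Measure.ae_ne volume 0] with x hx using hA.pos (norm_pos_iff.mpr hx)

theorem condA.integral_energy_nonneg [NeZero N] (hA : condA A A0 ℓ) (u : Rn N → ℝ) :
    0 ≤ ∫ x : Rn N, A ‖x‖ * ‖gradient u x‖ ^ N := by
  refine integral_nonneg_of_ae ?_
  filter_upwards [hA.ae_pos] with x hx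
  positivity

theorem normE_pow_eq_integral (hN : N ≠ 0) {u : Rn N → ℝ}
    (h : 0 ≤ ∫ x : Rn N, A ‖x‖ * ‖gradient u x‖ ^ N) :
    normE N A u ^ N = ∫ x : Rn N, A ‖x‖ * ‖gradient u x‖ ^ N := by
  rw [normE, ← rpow_natCast, ← rpow_mul h, inv_mul_cancel₀ (Nat.cast_ne_zero.mpr hN), rpow_one]

theorem condA.integral_pairing_le (hA : condA A A0 ℓ) (hN : 2 ≤ N) {u v : Rn N → ℝ}
    (hu : memE N A u) {κ : ℝ} (hκ : 0 ≤ κ)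
    (huv : ∀ x, ⟪gradient u x, gradient v x⟫ ≤ κ * ‖gradient u x‖ ^ 2) :
    ∫ x : Rn N, A ‖x‖ * ‖gradient u x‖ ^ (N - 2) * ⟪gradient u x, gradient v x⟫ ≤
      κ * ∫ x : Rn N, A ‖x‖ * ‖gradient u x‖ ^ N := by
  have : NeZero N := ⟨by omega⟩
  rw [← integral_const_mul]
  refine integral_le_of_ae_le_of_integrable ?_ (hu.2.const_mul κ)
    (by rw [integral_const_mul]; exact mul_nonneg hκ (hA.integral_energy_nonneg u))
  filter_upwards [hA.ae_pos] with x hAx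
  have hsplit : ‖gradient u x‖ ^ N = ‖gradient u x‖ ^ (N - 2) * ‖gradient u x‖ ^ 2 := by
    rw [← pow_add, Nat.sub_add_cancel hN]
  calc A ‖x‖ * ‖gradient u x‖ ^ (N - 2) * ⟪gradient u x, gradient v x⟫
      ≤ A ‖x‖ * ‖gradient u x‖ ^ (N - 2) * (κ * ‖gradient u x‖ ^ 2) := by gcongr; exact huv x
    _ = κ * (A ‖x‖ * ‖gradient u x‖ ^ N) := by rw [hsplit]; ring

end Energy

theorem weakSolMu.pairing_Fdivf {N : ℕ} {A Q f : ℝ → ℝ} {μ : ℝ} {u : Rn N → ℝ}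
    (hsol : weakSolMu N A Q f μ u) (hf0 : condf0 f) (hu : ∀ x, 0 ≤ u x)
    (hv : memE N A (Fdivf f ∘ u)) :
    ∫ x : Rn N, A ‖x‖ * ‖gradient u x‖ ^ (N - 2) * ⟪gradient u x, gradient (Fdivf f ∘ u) x⟫ =
      CN N * ∫ x : Rn N, ∫ y : Rn N,
        Gmu μ ‖x - y‖ * (Q ‖x‖ * Fprim f (u x)) * (Q ‖y‖ * Fprim f (u y)) := by
  rw [hsol _ hv]
  congr 1
  refine integral_congr_ae (Eventually.of_forall fun x => ?_)
  simp only [Function.comp, mul_assoc, hf0.mul_Fdivf (hu x), ← integral_mul_const]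
  congr 1 with y
  ring

theorem norm_bound_by_energy_general (N : ℕ) (hN : 2 ≤ N) (A Q f : ℝ → ℝ)
    (A0 ℓ τ Cf μ : ℝ)
    (hA : condA A A0 ℓ)
    (hf0 : condf0 f) (hfC1 : ContDiffOn ℝ 1 f (Set.Ioi 0))
    (hf3 : 1 - 2/(N:ℝ) < τ ∧ τ < 1 ∧ 0 < Cf ∧ condf3 f τ Cf)
    (u : Rn N → ℝ) (hu_mem : memE N A u)
    (hu_nn : ∀ x, 0 ≤ u x)
    (hu_sol : weakSolMu N A Q f μ u)
    (hv : memE N A (fun x => if 0 < u x then Fprim f (u x) / f (u x) else 0)) :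
    (τ - 1 + 2/(N:ℝ)) * normE N A u ^ N ≤ 2 * Jmu N A Q f μ u := by
  obtain ⟨hτ, hτ1, -, hf3⟩ := hf3
  have : NeZero N := ⟨by omega⟩
  have hτ0 : 0 < τ := by
    have : (2:ℝ) / N ≤ 1 := by rw [div_le_one (by positivity)]; exact_mod_cast hN
    linarith
  have hpair := hA.integral_pairing_le hN hu_mem (sub_nonneg.mpr hτ1.le)
    (inner_gradient_comp_le_of_nonneg hu_nn (fun t ht => hf3.hasDerivAt_Fdivf hτ0 hf0 hfC1 ht)
      (fun t ht => by linarith [(hf3 t ht).1]))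
  rw [hu_sol.pairing_Fdivf hf0 hu_nn hv] at hpair
  rw [normE_pow_eq_integral (NeZero.ne N) (hA.integral_energy_nonneg u), Jmu]
  linear_combination hpair

theorem norm_bound_by_energy (N : ℕ) (hN : 2 ≤ N) (A Q f : ℝ → ℝ)
    (A0 ℓ b0 b τ Cf μ0 μ : ℝ)
    (hA : condA A A0 ℓ) (hQ : condQ N Q b0 b)
    (hf0 : condf0 f) (hfC1 : ContDiffOn ℝ 1 f (Set.Ioi 0))
    (hf3 : 1 - 2/(N:ℝ) < τ ∧ τ < 1 ∧ 0 < Cf ∧ condf3 f τ Cf)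
    (hμ0 : 0 < μ0 ∧ μ0 ≤ 1) (hμ : 0 < μ ∧ μ < μ0)
    (u : Rn N → ℝ) (hu_rad : IsRadial u) (hu_mem : memE N A u)
    (hu_nn : ∀ x, 0 ≤ u x)
    (hu_sol : weakSolMu N A Q f μ u)
    (hv : memE N A (fun x => if 0 < u x then Fprim f (u x) / f (u x) else 0)) :
    (τ - 1 + 2/(N:ℝ)) * normE N A u ^ N ≤ 2 * Jmu N A Q f μ u :=
  norm_bound_by_energy_general N hN A Q f A0 ℓ τ Cf μ hA hf0 hfC1 hf3 u hu_mem hu_nn hu_sol hv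

end
end

section
/- Let N ≥ 2, A₀, ℓ, L, ρ > 0, and let A:(0,∞)→ℝ be measurable with A₀(1+r^ℓ) ≤ A(r) ≤ A₀(1+r^L) for all r ∈ (0,ρ]. For an integer n ≥ 2 define the Moser function w̃_n on ℝ^N by w̃_n(x) := (log n)^{(N-1)/N} for |x| ≤ ρ/n, w̃_n(x) := log(ρ/|x|)/(log n)^{1/N} for ρ/n < |x| < ρ, and w̃_n(x) := 0 for |x| ≥ ρ. Then ∫_{ℝ^N} A(|x|)|∇w̃_n(x)|^N dx = (ω_{N-1}/log n) ∫_{ρ/n}^{ρ} A(r)/r dr, and consequently ω_{N-1} A₀ (1 + (ρ^ℓ - (ρ/n)^ℓ)/(ℓ log n)) ≤ ∫_{ℝ^N} A(|x|)|∇w̃_n|^N dx ≤ ω_{N-1} A₀ (1 + (ρ^L - (ρ/n)^L)/(L log n)). -/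
open MeasureTheory Real Filter
open scoped Topology ENNReal RealInnerProductSpace

noncomputable section

/-!
The Moser function is radial, `w̃ₙ(x) = φ(|x|)`, where `φ` is locally constant off the annulus
`ρ/n < r < ρ` and `φ'(r) = -1 / ((log n)^{1/N} r)` on it. Away from the null spheres
`|x| ∈ {0, ρ/n, ρ}` we have `|∇(φ ∘ |·|)| = |φ'(|x|)|`, so polar coordinates turn the energy into
`ω_{N-1} ∫ r^{N-1} A(r) |φ'(r)|^N dr = (ω_{N-1} / log n) ∫_{ρ/n}^ρ A(r)/r dr`.
The bounds follow by comparing `A(r)/r` with `A₀(1 + r^t)/r = A₀(1/r + r^{t-1})`, whose integral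
is explicit.
-/
section RadialGradient

variable {E : Type*} [NormedAddCommGroup E] [InnerProductSpace ℝ E]

theorem hasFDerivAt_norm_of_ne_zero {x : E} (hx : x ≠ 0) :
    HasFDerivAt (fun y : E => ‖y‖) (‖x‖⁻¹ • innerSL ℝ x) x := by
  have h := (hasStrictFDerivAt_norm_sq x).hasFDerivAt.sqrt (by positivity)
  simp only [Real.sqrt_sq (norm_nonneg _)] at h
  convert h using 1
  rw [← Nat.cast_smul_eq_nsmul ℝ, smul_smul]
  congr 1
  field_simp
  norm_num

theorem norm_gradient_comp_norm [CompleteSpace E] {φ : ℝ → ℝ} {φ' : ℝ} {x : E} (hx : x ≠ 0)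
    (hφ : HasDerivAt φ φ' ‖x‖) : ‖gradient (fun y : E => φ ‖y‖) x‖ = |φ'| := by
  have hx' : ‖x‖ ≠ 0 := norm_ne_zero_iff.mpr hx
  have hderiv : HasFDerivAt (fun y : E => φ ‖y‖) (φ' • ‖x‖⁻¹ • innerSL ℝ x) x :=
    hφ.comp_hasFDerivAt x (hasFDerivAt_norm_of_ne_zero hx)
  rw [gradient, LinearIsometryEquiv.norm_map, hderiv.fderiv, norm_smul, norm_smul,
    innerSL_apply_norm, Real.norm_eq_abs, norm_inv, norm_norm, inv_mul_cancel₀ hx', mul_one]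

end RadialGradient

theorem MeasureTheory.Measure.ae_norm_ne {E : Type*} [NormedAddCommGroup E] [NormedSpace ℝ E]
    [MeasurableSpace E] [BorelSpace E] [FiniteDimensional ℝ E] [Nontrivial E]
    (μ : Measure E) [μ.IsAddHaarMeasure] (r : ℝ) : ∀ᵐ x ∂μ, ‖x‖ ≠ r := by
  refine measure_mono_null (fun x hx => ?_) (μ.addHaar_sphere 0 r)
  simpa using hx

theorem integral_fun_norm_eq_omegaS (N : ℕ) [NeZero N] (f : ℝ → ℝ) :
    ∫ x : Rn N, f ‖x‖ = omegaS N * ∫ r in Set.Ioi 0, r ^ (N - 1) * f r := by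
  rw [integral_fun_norm_addHaar volume f, finrank_euclideanSpace_fin, nsmul_eq_mul, smul_eq_mul,
    omegaS, measureReal_def, mul_assoc]
  rfl

/-- `moserProfile (ρ/n) ρ ((log n)^((N-1)/N)) ((log n)^(1/N))` is the radial profile of `w̃ₙ`. -/
def moserProfile (a ρ c k r : ℝ) : ℝ :=
  if r ≤ a then c else if r < ρ then Real.log (ρ / r) / k else 0

theorem hasDerivAt_moserProfile {a ρ c k r : ℝ} (ha : 0 < a) (hra : r ≠ a) (hrρ : r ≠ ρ) :
    HasDerivAt (moserProfile a ρ c k) ((Set.Ioo a ρ).indicator (fun s => -(k * s)⁻¹) r) r := by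
  rcases hra.lt_or_gt with hra | hra
  · rw [Set.indicator_of_notMem fun h => hra.not_gt h.1]
    refine (hasDerivAt_const r c).congr_of_eventuallyEq ?_
    filter_upwards [Iio_mem_nhds hra] with s hs
    simp [moserProfile, (Set.mem_Iio.mp hs).le]
  rcases hrρ.lt_or_gt with hrρ | hrρ
  · rw [Set.indicator_of_mem (Set.mem_Ioo.mpr ⟨hra, hrρ⟩)]
    have hr : r ≠ 0 := (ha.trans hra).ne'
    have hlog : HasDerivAt (fun s => (Real.log ρ - Real.log s) / k) (-(k * r)⁻¹) r := by
      refine (((Real.hasDerivAt_log hr).const_sub (Real.log ρ)).div_const k).congr_deriv ?_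
      ring
    refine hlog.congr_of_eventuallyEq ?_
    filter_upwards [Ioo_mem_nhds hra hrρ] with s hs
    have hs0 : 0 < s := ha.trans hs.1
    simp [moserProfile, hs.1.not_ge, hs.2, Real.log_div (hs0.trans hs.2).ne' hs0.ne']
  · rw [Set.indicator_of_notMem fun h => hrρ.not_gt h.2]
    refine (hasDerivAt_const r 0).congr_of_eventuallyEq ?_
    filter_upwards [Ioi_mem_nhds (max_lt hra hrρ)] with s hs
    rw [Set.mem_Ioi, max_lt_iff] at hs
    simp [moserProfile, hs.1.not_ge, hs.2.not_gt]

theorem integral_mul_norm_gradient_moserProfile_pow {N : ℕ} [NeZero N] (A : ℝ → ℝ)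
    {a ρ c k : ℝ} (ha : 0 < a) (haρ : a ≤ ρ) (hk : 0 ≤ k) :
    ∫ x : Rn N, A ‖x‖ * ‖gradient (fun y : Rn N => moserProfile a ρ c k ‖y‖) x‖ ^ N =
      omegaS N / k ^ N * ∫ r in a..ρ, A r / r := by
  set g : ℝ → ℝ := (Set.Ioo a ρ).indicator fun s => -(k * s)⁻¹
  have hae : (fun x : Rn N =>
      A ‖x‖ * ‖gradient (fun y : Rn N => moserProfile a ρ c k ‖y‖) x‖ ^ N)
        =ᵐ[volume] fun x => A ‖x‖ * |g ‖x‖| ^ N := by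
    filter_upwards [volume.ae_norm_ne 0, volume.ae_norm_ne a, volume.ae_norm_ne ρ]
      with x hx0 hxa hxρ
    rw [norm_gradient_comp_norm (norm_ne_zero_iff.mp hx0) (hasDerivAt_moserProfile ha hxa hxρ)]
  have hradial : ∀ r ∈ Set.Ioi (0 : ℝ), r ^ (N - 1) * (A r * |g r| ^ N) =
      (Set.Ioo a ρ).indicator (fun s => (k ^ N)⁻¹ * (A s / s)) r := by
    intro r hr
    by_cases hmem : r ∈ Set.Ioo a ρ
    · have hpow : r ^ N = r ^ (N - 1) * r := (pow_sub_one_mul (NeZero.ne N) r).symm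
      have hr : 0 < r := hr
      simp only [g, Set.indicator_of_mem hmem]
      rw [abs_neg, abs_of_nonneg (by positivity), inv_pow, mul_pow, mul_inv, hpow]
      field_simp
    · simp [g, hmem, NeZero.ne N]
  rw [integral_congr_ae hae, integral_fun_norm_eq_omegaS N fun r => A r * |g r| ^ N,
    setIntegral_congr_fun measurableSet_Ioi hradial, setIntegral_indicator measurableSet_Ioo,
    Set.inter_eq_self_of_subset_right (Set.Ioo_subset_Ioi_self.trans (Set.Ioi_subset_Ioi ha.le)),
    integral_const_mul, ← integral_Ioc_eq_integral_Ioo, ← intervalIntegral.integral_of_le haρ]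
  ring

section PowerBounds

variable {a b : ℝ}

theorem pos_of_mem_uIcc (ha : 0 < a) (hb : 0 < b) {r : ℝ} (hr : r ∈ Set.uIcc a b) : 0 < r :=
  (lt_min ha hb).trans_le hr.1

theorem intervalIntegrable_one_add_rpow_div (ha : 0 < a) (hb : 0 < b) (t : ℝ) :
    IntervalIntegrable (fun r => (1 + r ^ t) / r) volume a b :=
  ContinuousOn.intervalIntegrable fun r hr =>
    have hr : r ≠ 0 := (pos_of_mem_uIcc ha hb hr).ne'
    (continuousAt_const.add (continuousAt_id.rpow_const (Or.inl hr))).div continuousAt_id hr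
      |>.continuousWithinAt

theorem integral_one_add_rpow_div (ha : 0 < a) (hb : 0 < b) {t : ℝ} (ht : t ≠ 0) :
    ∫ r in a..b, (1 + r ^ t) / r = Real.log (b / a) + (b ^ t - a ^ t) / t := by
  have h0 : (0 : ℝ) ∉ Set.uIcc a b := fun h => (pos_of_mem_uIcc ha hb h).false
  have hsplit : Set.EqOn (fun r : ℝ => (1 + r ^ t) / r) (fun r => 1 / r + r ^ (t - 1))
      (Set.uIcc a b) := fun r hr => by
    have hr := pos_of_mem_uIcc ha hb hr
    simp only [Real.rpow_sub hr, Real.rpow_one]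
    ring
  rw [intervalIntegral.integral_congr hsplit, intervalIntegral.integral_add
      (intervalIntegral.intervalIntegrable_one_div
        (fun r hr => (pos_of_mem_uIcc ha hb hr).ne') continuousOn_id)
      (intervalIntegral.intervalIntegrable_rpow (Or.inr h0)),
    integral_one_div h0, integral_rpow (Or.inr ⟨by simpa [sub_eq_iff_eq_add] using ht, h0⟩),
    sub_add_cancel]

end PowerBounds

theorem intervalIntegral.integral_mem_Icc_of_le_of_le {f g₁ g₂ : ℝ → ℝ} {a b : ℝ}
    (hab : a ≤ b)
    (hf : AEStronglyMeasurable f (volume.restrict (Set.Ioc a b)))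
    (hg₁ : IntervalIntegrable g₁ volume a b) (hg₂ : IntervalIntegrable g₂ volume a b)
    (h : ∀ r ∈ Set.Icc a b, g₁ r ≤ f r ∧ f r ≤ g₂ r) :
    ∫ r in a..b, f r ∈ Set.Icc (∫ r in a..b, g₁ r) (∫ r in a..b, g₂ r) := by
  have hle : ∀ᵐ r ∂volume.restrict (Set.Ioc a b), g₁ r ≤ f r ∧ f r ≤ g₂ r :=
    (ae_restrict_iff' measurableSet_Ioc).mpr <|
      ae_of_all _ fun r hr => h r (Set.Ioc_subset_Icc_self hr)
  have hfi : IntervalIntegrable f volume a b := by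
    rw [intervalIntegrable_iff_integrableOn_Ioc_of_le hab] at hg₁ hg₂ ⊢
    exact integrable_of_le_of_le hf (hle.mono fun _ => And.left) (hle.mono fun _ => And.right)
      hg₁ hg₂
  exact ⟨integral_mono_on hab hg₁ hfi fun r hr => (h r hr).1,
    integral_mono_on hab hfi hg₂ fun r hr => (h r hr).2⟩

theorem integral_div_mem_Icc_of_one_add_rpow_bounds {A : ℝ → ℝ} {A0 ℓ L a b : ℝ}
    (hA : Measurable A) (ha : 0 < a) (hab : a ≤ b) (hℓ : ℓ ≠ 0) (hL : L ≠ 0)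
    (hbound : ∀ r, 0 < r → r ≤ b →
      A0 * (1 + r ^ ℓ) ≤ A r ∧ A r ≤ A0 * (1 + r ^ L)) :
    ∫ r in a..b, A r / r ∈ Set.Icc (A0 * (Real.log (b / a) + (b ^ ℓ - a ^ ℓ) / ℓ))
      (A0 * (Real.log (b / a) + (b ^ L - a ^ L) / L)) := by
  have hb : 0 < b := ha.trans_le hab
  rw [← integral_one_add_rpow_div ha hb hℓ, ← integral_one_add_rpow_div ha hb hL,
    ← intervalIntegral.integral_const_mul, ← intervalIntegral.integral_const_mul]
  refine intervalIntegral.integral_mem_Icc_of_le_of_le hab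
    (hA.div measurable_id).aestronglyMeasurable
    ((intervalIntegrable_one_add_rpow_div ha hb ℓ).const_mul A0)
    ((intervalIntegrable_one_add_rpow_div ha hb L).const_mul A0) fun r hr => ?_
  have hr0 : 0 < r := ha.trans_le hr.1
  simp only [← mul_div_assoc, div_le_div_iff_of_pos_right hr0]
  exact hbound r hr0 hr.2

theorem moser_function_energy_general (N : ℕ) (hN : 2 ≤ N) (A : ℝ → ℝ)
    (A0 ℓ L ρ : ℝ)
    (hℓ : 0 < ℓ) (hL : 0 < L) (hρ : 0 < ρ)
    (hmeas : Measurable A)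
    (hbound : ∀ r : ℝ, 0 < r → r ≤ ρ → A0 * (1 + r ^ ℓ) ≤ A r ∧ A r ≤ A0 * (1 + r ^ L))
    (n : ℕ) (hn : 2 ≤ n)
    (w : Rn N → ℝ)
    (hw : w = fun x => if ‖x‖ ≤ ρ / n then (Real.log n) ^ (((N:ℝ) - 1)/(N:ℝ))
      else if ‖x‖ < ρ then Real.log (ρ / ‖x‖) / (Real.log n) ^ ((N:ℝ)⁻¹) else 0) :
    (∫ x : Rn N, A ‖x‖ * ‖gradient w x‖ ^ N) =
      (omegaS N / Real.log n) * ∫ r in (ρ/(n:ℝ))..ρ, A r / r ∧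
    omegaS N * A0 * (1 + (ρ ^ ℓ - (ρ/(n:ℝ)) ^ ℓ) / (ℓ * Real.log n)) ≤
      (∫ x : Rn N, A ‖x‖ * ‖gradient w x‖ ^ N) ∧
    (∫ x : Rn N, A ‖x‖ * ‖gradient w x‖ ^ N) ≤
      omegaS N * A0 * (1 + (ρ ^ L - (ρ/(n:ℝ)) ^ L) / (L * Real.log n)) := by
  have : NeZero N := ⟨by omega⟩
  have hn1 : (1 : ℝ) < n := by exact_mod_cast hn
  have hlog : 0 < Real.log n := Real.log_pos hn1
  have ha : 0 < ρ / n := by positivity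
  have haρ : ρ / n ≤ ρ := div_le_self hρ.le hn1.le
  have energy : ∫ x : Rn N, A ‖x‖ * ‖gradient w x‖ ^ N =
      omegaS N / Real.log n * ∫ r in (ρ / n)..ρ, A r / r := by
    have h := integral_mul_norm_gradient_moserProfile_pow (N := N) A
      (c := Real.log n ^ (((N : ℝ) - 1) / N)) ha haρ
      (by positivity : 0 ≤ Real.log n ^ (N : ℝ)⁻¹)
    rw [Real.rpow_inv_natCast_pow hlog.le (NeZero.ne N)] at h
    subst hw
    exact h
  obtain ⟨hlow, hupp⟩ :=
    integral_div_mem_Icc_of_one_add_rpow_bounds hmeas ha haρ hℓ.ne' hL.ne' hbound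
  have hω : 0 ≤ omegaS N / Real.log n := by unfold omegaS; positivity
  have hscale : ∀ t : ℝ, t ≠ 0 →
      omegaS N * A0 * (1 + (ρ ^ t - (ρ / n) ^ t) / (t * Real.log n)) =
        omegaS N / Real.log n * (A0 * (Real.log (ρ / (ρ / n)) + (ρ ^ t - (ρ / n) ^ t) / t)) :=
    fun t ht => by
      rw [div_div_cancel₀ hρ.ne']
      field_simp
  rw [energy, hscale ℓ hℓ.ne', hscale L hL.ne']
  exact ⟨rfl, mul_le_mul_of_nonneg_left hlow hω, mul_le_mul_of_nonneg_left hupp hω⟩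

theorem moser_function_energy (N : ℕ) (hN : 2 ≤ N) (A : ℝ → ℝ)
    (A0 ℓ L ρ : ℝ)
    (hA0 : 0 < A0) (hℓ : 0 < ℓ) (hL : 0 < L) (hρ : 0 < ρ)
    (hmeas : Measurable A)
    (hbound : ∀ r : ℝ, 0 < r → r ≤ ρ → A0 * (1 + r ^ ℓ) ≤ A r ∧ A r ≤ A0 * (1 + r ^ L))
    (n : ℕ) (hn : 2 ≤ n)
    (w : Rn N → ℝ)
    (hw : w = fun x => if ‖x‖ ≤ ρ / n then (Real.log n) ^ (((N:ℝ) - 1)/(N:ℝ))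
      else if ‖x‖ < ρ then Real.log (ρ / ‖x‖) / (Real.log n) ^ ((N:ℝ)⁻¹) else 0) :
    (∫ x : Rn N, A ‖x‖ * ‖gradient w x‖ ^ N) =
      (omegaS N / Real.log n) * ∫ r in (ρ/(n:ℝ))..ρ, A r / r ∧
    omegaS N * A0 * (1 + (ρ ^ ℓ - (ρ/(n:ℝ)) ^ ℓ) / (ℓ * Real.log n)) ≤
      (∫ x : Rn N, A ‖x‖ * ‖gradient w x‖ ^ N) ∧
    (∫ x : Rn N, A ‖x‖ * ‖gradient w x‖ ^ N) ≤
      omegaS N * A0 * (1 + (ρ ^ L - (ρ/(n:ℝ)) ^ L) / (L * Real.log n)) :=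
  moser_function_energy_general N hN A A0 ℓ L ρ hℓ hL hρ hmeas hbound n hn w hw

end
end

section
/- Let N ≥ 2 and let f: ℝ → ℝ be continuously differentiable on (0,∞) with f(t) > 0 for t > 0 and f(t) = 0 for t ≤ 0, F(t) := ∫₀^t f(s) ds, and assume there exist τ ∈ (1-2/N, 1) and C > 0 with τ ≤ F(t)f'(t)/f(t)² ≤ C for all t > 0, as well as lim_{t→∞} F(t)f'(t)/f(t)² = 1. Define H(t) := ∫₀^t ((N/2)·F(s)f'(s)/f(s)² - (N-2)/2)^{1/N} ds for t ≥ 0. Then H is well-defined (the integrand is positive), and for every ε ∈ (0,1) there exists s_ε > 0 such that t ≤ s_ε + H(t)/(1-ε) for all t ≥ 0. -/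
open MeasureTheory Real Filter
open scoped Topology ENNReal RealInnerProductSpace

noncomputable section

theorem auxiliary_H_bound (N : ℕ) (hN : 2 ≤ N) (f : ℝ → ℝ) (τ C : ℝ)
    (hC1 : ContDiffOn ℝ 1 f (Set.Ioi 0))
    (hpos : ∀ t > 0, 0 < f t) (hzero : ∀ t ≤ 0, f t = 0)
    (hτ : 1 - 2/(N:ℝ) < τ) (hτ1 : τ < 1) (hC : 0 < C)
    (hf3 : condf3 f τ C)
    (hf4 : condf4 f) :
    (∀ s : ℝ, 0 < s →
      0 < ((N:ℝ)/2) * (Fprim f s * deriv f s / f s ^ 2) - ((N:ℝ) - 2)/2) ∧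
    ∀ ε : ℝ, 0 < ε → ε < 1 → ∃ sε : ℝ, 0 < sε ∧ ∀ t : ℝ, 0 ≤ t →
      t ≤ sε + (∫ s in (0:ℝ)..t,
        (((N:ℝ)/2) * (Fprim f s * deriv f s / f s ^ 2) - ((N:ℝ) - 2)/2) ^ ((N:ℝ)⁻¹))
        / (1 - ε) := by
  have hN2 : (2:ℝ) ≤ (N:ℝ) := by exact_mod_cast hN
  have hNpos : (0:ℝ) < (N:ℝ) := by linarith
  have hτpos : 0 < τ := by
    have : (0:ℝ) ≤ 1 - 2/(N:ℝ) := by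
      rw [sub_nonneg, div_le_one hNpos]; linarith
    linarith
  have hδ : 0 < ((N:ℝ)/2) * τ - ((N:ℝ) - 2)/2 := by
    have h1 : ((N:ℝ)/2) * (1 - 2/(N:ℝ)) = ((N:ℝ) - 2)/2 := by
      field_simp
    have h2 := mul_lt_mul_of_pos_left hτ (show (0:ℝ) < (N:ℝ)/2 by linarith)
    linarith
  have hGpos : ∀ s : ℝ, 0 < s →
      0 < ((N:ℝ)/2) * (Fprim f s * deriv f s / f s ^ 2) - ((N:ℝ) - 2)/2 := by
    intro s hs
    have h1 := (hf3 s hs).1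
    have : ((N:ℝ)/2) * τ ≤ ((N:ℝ)/2) * (Fprim f s * deriv f s / f s ^ 2) :=
      mul_le_mul_of_nonneg_left h1 (by positivity)
    linarith
  set Mb : ℝ := ((N:ℝ)/2) * C - ((N:ℝ) - 2)/2 with hMb
  have hGle : ∀ s : ℝ, 0 < s →
      ((N:ℝ)/2) * (Fprim f s * deriv f s / f s ^ 2) - ((N:ℝ) - 2)/2 ≤ Mb := by
    intro s hs
    have h2 := (hf3 s hs).2
    have : ((N:ℝ)/2) * (Fprim f s * deriv f s / f s ^ 2) ≤ ((N:ℝ)/2) * C :=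
      mul_le_mul_of_nonneg_left h2 (by positivity)
    rw [hMb]; linarith
  refine ⟨hGpos, ?_⟩
  set g : ℝ → ℝ := fun s =>
    (((N:ℝ)/2) * (Fprim f s * deriv f s / f s ^ 2) - ((N:ℝ) - 2)/2) ^ ((N:ℝ)⁻¹) with hg
  -- interval integrability of f
  have hInt0 : ∀ t : ℝ, 0 < t → IntervalIntegrable f volume 0 t := by
    intro t ht
    by_contra h
    have h0 : Fprim f t = 0 := intervalIntegral.integral_undef h
    have h1 := (hf3 t ht).1
    rw [h0] at h1
    simp at h1
    linarith
  have hIntf : ∀ a b : ℝ, IntervalIntegrable f volume a b := by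
    have h0b : ∀ b : ℝ, IntervalIntegrable f volume 0 b := by
      intro b
      rcases lt_trichotomy b 0 with hb | hb | hb
      · refine IntervalIntegrable.symm ?_
        rw [intervalIntegrable_iff_integrableOn_Ioc_of_le hb.le]
        have hEq : Set.EqOn f 0 (Set.Ioc b 0) := fun x hx => hzero x hx.2
        rw [integrableOn_congr_fun hEq measurableSet_Ioc]
        exact integrableOn_zero
      · simp [hb]
      · exact hInt0 b hb
    exact fun a b => (h0b a).symm.trans (h0b b)
  have hFcont : Continuous (Fprim f) := intervalIntegral.continuous_primitive hIntf 0
  have hf'cont : ContinuousOn (deriv f) (Set.Ioi 0) :=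
    hC1.continuousOn_deriv_of_isOpen isOpen_Ioi le_rfl
  have hGcont : ContinuousOn
      (fun s => ((N:ℝ)/2) * (Fprim f s * deriv f s / f s ^ 2) - ((N:ℝ) - 2)/2)
      (Set.Ioi 0) := by
    apply ContinuousOn.sub _ continuousOn_const
    apply ContinuousOn.mul continuousOn_const
    exact ((hFcont.continuousOn.mul hf'cont).div (hC1.continuousOn.pow 2)
      (fun x hx => pow_ne_zero _ (hpos x hx).ne'))
  have hgcont : ContinuousOn g (Set.Ioi 0) := by
    rw [hg]
    exact hGcont.rpow_const (fun x hx => Or.inl (hGpos x hx).ne')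
  have hgnonneg : ∀ s : ℝ, 0 < s → 0 ≤ g s := by
    intro s hs
    rw [hg]
    exact Real.rpow_nonneg (hGpos s hs).le _
  have hgub : ∀ s : ℝ, 0 < s → g s ≤ Mb ^ ((N:ℝ)⁻¹) := by
    intro s hs
    rw [hg]
    exact Real.rpow_le_rpow (hGpos s hs).le (hGle s hs) (by positivity)
  have hgInt : ∀ a b : ℝ, 0 ≤ a → a ≤ b → IntervalIntegrable g volume a b := by
    intro a b ha hab
    rw [intervalIntegrable_iff_integrableOn_Ioc_of_le hab]
    have hsub : Set.Ioc a b ⊆ Set.Ioi 0 := fun x hx => lt_of_le_of_lt ha hx.1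
    refine ⟨((hgcont.mono hsub).aemeasurable measurableSet_Ioc).aestronglyMeasurable, ?_⟩
    refine HasFiniteIntegral.restrict_of_bounded (C := Mb ^ ((N:ℝ)⁻¹)) measure_Ioc_lt_top ?_
    rw [ae_restrict_iff' measurableSet_Ioc]
    refine ae_of_all _ fun x hx => ?_
    have hx0 : 0 < x := lt_of_le_of_lt ha hx.1
    rw [Real.norm_eq_abs, abs_of_nonneg (hgnonneg x hx0)]
    exact hgub x hx0
  have hHnonneg : ∀ t : ℝ, 0 ≤ t → 0 ≤ ∫ s in (0:ℝ)..t, g s := by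
    intro t ht
    apply intervalIntegral.integral_nonneg_of_ae_restrict ht
    refine (ae_restrict_iff' measurableSet_Icc).mpr ?_
    have h0 : (volume : Measure ℝ) {(0:ℝ)} = 0 := Real.volume_singleton
    filter_upwards [compl_mem_ae_iff.2 h0] with x hx hxI
    show (0:ℝ) ≤ g x
    have hx0 : 0 < x := lt_of_le_of_ne hxI.1 (fun h => hx (by simp [← h]))
    exact hgnonneg x hx0
  -- limit of g at infinity
  have hG1 : Tendsto
      (fun s => ((N:ℝ)/2) * (Fprim f s * deriv f s / f s ^ 2) - ((N:ℝ) - 2)/2)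
      atTop (𝓝 1) := by
    have h := (hf4.const_mul ((N:ℝ)/2)).sub_const (((N:ℝ) - 2)/2)
    have heq : ((N:ℝ)/2) * 1 - ((N:ℝ) - 2)/2 = 1 := by ring
    rw [heq] at h
    exact h
  have hg1 : Tendsto g atTop (𝓝 1) := by
    rw [hg]
    have h := hG1.rpow_const (p := (N:ℝ)⁻¹) (Or.inl one_ne_zero)
    rwa [Real.one_rpow] at h
  intro ε hε hε1
  have h1ε : 0 < 1 - ε := by linarith
  obtain ⟨T, hT⟩ := eventually_atTop.1
    (hg1.eventually (eventually_ge_nhds (by linarith : 1 - ε < 1)))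
  refine ⟨max T 1, lt_of_lt_of_le one_pos (le_max_right T 1), ?_⟩
  set sε := max T 1 with hsε
  have hs0 : (0:ℝ) ≤ sε := le_trans zero_le_one (le_max_right T 1)
  intro t ht
  by_cases hts : t ≤ sε
  · have := div_nonneg (hHnonneg t ht) h1ε.le
    linarith
  · push_neg at hts
    have hsplit := intervalIntegral.integral_add_adjacent_intervals
      (hgInt 0 sε le_rfl hs0) (hgInt sε t hs0 hts.le)
    have hmono : (1 - ε) * (t - sε) ≤ ∫ s in sε..t, g s := by
      have h := intervalIntegral.integral_mono_on hts.le intervalIntegrable_const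
        (hgInt sε t hs0 hts.le)
        (fun x hx => hT x (le_trans (le_max_left T 1) hx.1))
      rwa [intervalIntegral.integral_const, smul_eq_mul, mul_comm] at h
    have hH : (1 - ε) * (t - sε) ≤ ∫ s in (0:ℝ)..t, g s := by
      have h0 := hHnonneg sε hs0
      linarith [hsplit, hmono]
    have hdiv : t - sε ≤ (∫ s in (0:ℝ)..t, g s) / (1 - ε) := by
      rw [le_div_iff₀ h1ε]
      linarith
    linarith


end
end
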